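/- arXiv:1503.02523 — 5 statements merged into one kernel-verified Lean document; each statement's English description precedes it below -/
import Mathlib

section
/- Let V be a finite-dimensional vector space of dimension m over a field k, with basis v_1, ..., v_m. Suppose for each i we are given a finite index set T_i and vectors v_{i,r} ∈ V for r ∈ T_i such that v_i = Σ_{r ∈ T_i} v_{i,r}. Then for each i there exists r_i ∈ T_i such that {v_{i,r_i}}_{i=1}^m is a basis of V. -/
/-!
Expanding each vector `b i = ∑ r ∈ T i, v i r` by multilinearity of the determinant with respect
to the basis `b` gives `1 = b.det b = ∑ r ∈ piFinset T, b.det (fun i => v i (r i))`, so some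
choice `r` has nonzero determinant, and the vectors `v i (r i)` then form a basis.
-/

open Fintype

theorem MultilinearMap.exists_mem_piFinset_map_ne_zero_of_map_sum_ne_zero
    {R ι M₂ : Type*} {M₁ κ : ι → Type*} [Semiring R] [DecidableEq ι] [Fintype ι]
    [∀ i, AddCommMonoid (M₁ i)] [AddCommMonoid M₂] [∀ i, Module R (M₁ i)] [Module R M₂]
    (f : MultilinearMap R M₁ M₂) (A : ∀ i, Finset (κ i)) (g : ∀ i, κ i → M₁ i)
    (h : (f fun i => ∑ j ∈ A i, g i j) ≠ 0) :
    ∃ r ∈ piFinset A, (f fun i => g i (r i)) ≠ 0 := by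
  rw [f.map_sum_finset] at h
  exact Finset.exists_ne_zero_of_sum_ne_zero h

/-- Let `V` be a finite-dimensional vector space of dimension `m` over a field `k`, with basis
`v_1, ..., v_m`.  Suppose for each `i` we are given a finite index set `T_i` and vectors
`v_{i,r} ∈ V` for `r ∈ T_i` such that `v_i = Σ_{r ∈ T_i} v_{i,r}`.  Then for each `i` there
exists `r_i ∈ T_i` such that `{v_{i,r_i}}_{i=1}^m` is a basis of `V`. -/
theorem stmt0 {k V ι : Type*} [Field k] [AddCommGroup V] [Module k V]
    {m : ℕ} (b : Module.Basis (Fin m) k V)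
    (T : Fin m → Finset ι) (v : Fin m → ι → V)
    (hsum : ∀ i : Fin m, b i = ∑ r ∈ T i, v i r) :
    ∃ r : Fin m → ι, (∀ i, r i ∈ T i) ∧
      LinearIndependent k (fun i : Fin m => v i (r i)) ∧
      Submodule.span k (Set.range (fun i : Fin m => v i (r i))) = ⊤ := by
  have hdet : (b.det.toMultilinearMap fun i => ∑ r ∈ T i, v i r) ≠ 0 := by
    rw [AlternatingMap.coe_multilinearMap, ← funext hsum, b.det_self]
    exact one_ne_zero
  obtain ⟨r, hr, hdet_r⟩ :=
    b.det.toMultilinearMap.exists_mem_piFinset_map_ne_zero_of_map_sum_ne_zero T v hdet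
  exact ⟨r, mem_piFinset.mp hr, b.is_basis_iff_det.mpr (isUnit_iff_ne_zero.mpr hdet_r)⟩
end

section
/- Let A ⊆ R be commutative rings with R finitely generated as an A-module, and let d ∈ A. Suppose the localization map A[d⁻¹] → R[d⁻¹] is surjective and R = A + dR. Then A = R. -/
/-!
A power `d ^ n` pushes any given `x : R` into `A`, by surjectivity of `A[d⁻¹] → R[d⁻¹]`.
Nakayama's lemma applied to the finite `A`-module `R / A = d • (R / A)` gives `r ≡ 1 [mod d]`
with `r • R ⊆ A`. Since `r` and `d ^ n` are coprime, `x = u r x + v d ^ n x ∈ A`.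
-/

namespace Submodule

variable {A M : Type*} [CommRing A] [AddCommGroup M] [Module A M]

theorem mem_of_isCoprime_of_smul_mem (N : Submodule A M) {a b : A} (hab : IsCoprime a b)
    {x : M} (ha : a • x ∈ N) (hb : b • x ∈ N) : x ∈ N := by
  obtain ⟨u, v, huv⟩ := hab
  have hx : x = u • a • x + v • b • x := by
    rw [smul_smul, smul_smul, ← add_smul, huv, one_smul]
  rw [hx]
  exact N.add_mem (N.smul_mem u ha) (N.smul_mem v hb)

theorem exists_isCoprime_smul_mem_of_top_le_sup_smul [Module.Finite A M] (N : Submodule A M)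
    (d : A) (hN : ⊤ ≤ N ⊔ Ideal.span {d} • ⊤) : ∃ r : A, IsCoprime r d ∧ ∀ x : M, r • x ∈ N := by
  obtain ⟨r, hr, hrN⟩ :=
    exists_sub_one_mem_and_smul_le_of_fg_of_le_sup Module.Finite.fg_top le_rfl hN
  obtain ⟨c, hc⟩ := Ideal.mem_span_singleton'.1 hr
  refine ⟨r, ⟨1, -c, by linear_combination -hc⟩, fun x => hrN ?_⟩
  exact Submodule.smul_mem_pointwise_smul x r ⊤ trivial

theorem eq_top_of_pow_smul_mem_of_top_le_sup_smul [Module.Finite A M] (N : Submodule A M)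
    (d : A) (hpow : ∀ x : M, ∃ n : ℕ, d ^ n • x ∈ N) (hN : ⊤ ≤ N ⊔ Ideal.span {d} • ⊤) :
    N = ⊤ := by
  obtain ⟨r, hrd, hrN⟩ := exists_isCoprime_smul_mem_of_top_le_sup_smul N d hN
  refine eq_top_iff.2 fun x _ => ?_
  obtain ⟨n, hn⟩ := hpow x
  exact N.mem_of_isCoprime_of_smul_mem (hrd.pow_right (n := n)) (hrN x) hn

end Submodule

/-- Let `A ⊆ R` be commutative rings with `R` finitely generated as an `A`-module, and `d ∈ A`.
Suppose the localization map `A[d⁻¹] → R[d⁻¹]` is surjective and `R = A + dR`.  Then `A = R`. -/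
theorem stmt3 {R : Type*} [CommRing R] (A : Subring R) (d : A)
    [Module.Finite A R]
    (hsurj : Function.Surjective (Localization.awayMap A.subtype d))
    (hsum : ∀ r : R, ∃ a ∈ A, ∃ r' : R, r = a + (d : R) * r') :
    A = ⊤ := by
  have mem_one_iff : ∀ x : R, x ∈ (1 : Submodule A R) ↔ x ∈ A := fun x =>
    Submodule.mem_one.trans ⟨by rintro ⟨y, rfl⟩; exact y.2, fun hx => ⟨⟨x, hx⟩, rfl⟩⟩
  have hpow : ∀ x : R, ∃ n : ℕ, d ^ n • x ∈ (1 : Submodule A R) := fun x => by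
    obtain ⟨b, n, hb⟩ := Localization.awayMap_surjective_iff.1 hsurj x
    exact ⟨n, Submodule.mem_one.2 ⟨b, by rw [Algebra.smul_def, map_pow]; exact hb⟩⟩
  have hN : ⊤ ≤ (1 : Submodule A R) ⊔ Ideal.span {d} • ⊤ := fun x _ => by
    obtain ⟨a, ha, r', rfl⟩ := hsum x
    exact Submodule.add_mem_sup ((mem_one_iff a).2 ha)
      (Submodule.smul_mem_smul (Ideal.mem_span_singleton_self d) trivial)
  have htop := Submodule.eq_top_of_pow_smul_mem_of_top_le_sup_smul 1 d hpow hN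
  exact eq_top_iff.2 fun x _ => (mem_one_iff x).1 (htop ▸ trivial)
end

section
/- Let 𝔤 be a Lie algebra over a field k of characteristic zero acting on its symmetric algebra S(𝔤) by derivations extending the adjoint action, let η ∈ 𝔤* and h ∈ 𝔤 with (ad h)(η) = λη for some nonzero scalar λ (coadjoint action). Then every 𝔤-invariant element p of S(𝔤) that is homogeneous of positive degree satisfies p(η) = 0. -/
/-!
At `η`, the coadjoint vector field of `h` is `-λ` times the radial vector field, because
`η ⁅h, x⁆ = -λ η x`. Evaluating the invariance of `p` under `h` at `η` therefore gives, by
Euler's identity, `-λ n p(η) = 0`, and `λ n ≠ 0` in characteristic zero.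
-/

open MvPolynomial

theorem MvPolynomial.IsHomogeneous.sum_mul_eval_pderiv {R σ : Type*} [CommSemiring R]
    [Fintype σ] {p : MvPolynomial σ R} {n : ℕ} (hp : p.IsHomogeneous n) (x : σ → R) :
    ∑ i, x i * eval x (pderiv i p) = n * eval x p := by
  simpa using congrArg (eval x) hp.sum_X_mul_pderiv

theorem Module.Basis.eval_sum_C_repr_mul_X {k V ι : Type*} [CommSemiring k] [AddCommMonoid V]
    [Module k V] [Fintype ι] (b : Module.Basis ι k V) (η : Module.Dual k V) (v : V) :
    eval (fun i => η (b i)) (∑ i, C (b.repr v i) * X i) = η v := by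
  calc _ = ∑ i, b.repr v i * η (b i) := by simp
    _ = η (∑ i, b.repr v i • b i) := by simp only [map_sum, map_smul, smul_eq_mul]
    _ = η v := by rw [b.sum_repr]

/-- `S(𝔤)` is identified, via the basis `b` of `𝔤`, with `MvPolynomial ι k`, and `p(ξ)` is
`eval (fun i => ξ (b i)) p`. Invariance of `p` under `a ∈ 𝔤` is the vanishing of
`Σ_j (∂p/∂X_j) · (Σ_i (coefficient of b i in ⁅a, b j⁆) · X_i)`, the derivative of `p` along the
coadjoint vector field of `a`; `(ad h)(η) = λ • η` reads `η ⁅h, x⁆ = -λ * η x`. -/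
theorem stmt4 {k L ι : Type*} [Field k] [CharZero k]
    [LieRing L] [LieAlgebra k L] [Fintype ι] (b : Module.Basis ι k L)
    (p : MvPolynomial ι k) (n : ℕ) (hn : 0 < n) (hp : p.IsHomogeneous n)
    (hinv : ∀ a : L,
      ∑ j : ι, (pderiv j p) * (∑ i : ι, C (b.repr ⁅a, b j⁆ i) * X i) = 0)
    (η : Module.Dual k L) (h : L) (lam : k) (hlam : lam ≠ 0)
    (heig : ∀ x : L, η ⁅h, x⁆ = -(lam * η x)) :
    MvPolynomial.eval (fun i => η (b i)) p = 0 := by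
  set ξ : ι → k := fun i => η (b i)
  have hflow : eval ξ (∑ j, pderiv j p * ∑ i, C (b.repr ⁅h, b j⁆ i) * X i)
      = -(lam * (n * eval ξ p)) := by
    rw [← hp.sum_mul_eval_pderiv, Finset.mul_sum, ← Finset.sum_neg_distrib, map_sum]
    refine Finset.sum_congr rfl fun j _ => ?_
    rw [map_mul, b.eval_sum_C_repr_mul_X, heig]
    ring
  rw [hinv h, map_zero, eq_comm, neg_eq_zero] at hflow
  simpa [hlam, hn.ne'] using hflow
end

section
/- Let 𝔞 be the 4-dimensional Lie algebra with basis {h, x, y, z} and nonzero brackets [x,y] = z, [h,x] = c·x, [h,y] = (1−c)·y, [h,z] = z over a field k of characteristic 0 with c ∉ {0,1}. Let ζ ∈ 𝔞* be the element dual to z (i.e., ζ(z) = 1, ζ(h) = ζ(x) = ζ(y) = 0). Then the coadjoint stabilizer 𝔞^ζ = {a ∈ 𝔞 : ζ([a,b]) = 0 for all b ∈ 𝔞} is zero. -/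
/-!
The stabilizer `𝔞^ζ` is the left kernel of the Kirillov form `(a, x) ↦ ζ ⁅a, x⁆`. Since `ζ`
kills `h, x, y`, the Gram matrix of this form in the basis `h, x, y, z` only sees the
`z`-components of the brackets; it is antidiagonal with entries `±1`, so its determinant is `1`
and the form is nondegenerate.
-/

section CoadjointForm

variable {R L : Type*} [CommRing R] [LieRing L] [LieAlgebra R L]

def coadjointForm (ζ : Module.Dual R L) : LinearMap.BilinForm R L :=
  (LieModule.toEnd R L L : L →ₗ[R] Module.End R L).compr₂ ζ

@[simp]
lemma coadjointForm_apply (ζ : Module.Dual R L) (a x : L) :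
    coadjointForm ζ a x = ζ ⁅a, x⁆ :=
  rfl

lemma toMatrix₂_coadjointForm (b : Module.Basis (Fin 4) R L) (c : R)
    (hxy : ⁅b 1, b 2⁆ = b 3) (hhx : ⁅b 0, b 1⁆ = c • b 1)
    (hhy : ⁅b 0, b 2⁆ = (1 - c) • b 2) (hhz : ⁅b 0, b 3⁆ = b 3)
    (hxz : ⁅b 1, b 3⁆ = 0) (hyz : ⁅b 2, b 3⁆ = 0)
    (ζ : Module.Dual R L) (hζ3 : ζ (b 3) = 1) (hζ : ∀ i : Fin 4, i ≠ 3 → ζ (b i) = 0) :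
    LinearMap.toMatrix₂ b b (coadjointForm ζ) =
      !![0, 0, 0, 1; 0, 0, 1, 0; 0, -1, 0, 0; -1, 0, 0, 0] := by
  have hζ0 : ζ (b 0) = 0 := hζ 0 (by decide)
  have hζ1 : ζ (b 1) = 0 := hζ 1 (by decide)
  have hζ2 : ζ (b 2) = 0 := hζ 2 (by decide)
  ext i j
  fin_cases i <;> fin_cases j <;>
    simp [LinearMap.toMatrix₂_apply, ← lie_skew (b 1) (b 0), ← lie_skew (b 2) (b 0),
      ← lie_skew (b 3) (b 0), ← lie_skew (b 2) (b 1), ← lie_skew (b 3) (b 1),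
      ← lie_skew (b 3) (b 2), *]

end CoadjointForm

theorem stmt7_general {k L : Type*} [Field k] [LieRing L] [LieAlgebra k L]
    (b : Module.Basis (Fin 4) k L) (c : k)
    (hxy : ⁅b 1, b 2⁆ = b 3)
    (hhx : ⁅b 0, b 1⁆ = c • b 1)
    (hhy : ⁅b 0, b 2⁆ = (1 - c) • b 2)
    (hhz : ⁅b 0, b 3⁆ = b 3)
    (hxz : ⁅b 1, b 3⁆ = 0) (hyz : ⁅b 2, b 3⁆ = 0)
    (ζ : Module.Dual k L) (hζ3 : ζ (b 3) = 1) (hζ : ∀ i : Fin 4, i ≠ 3 → ζ (b i) = 0) :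
    ∀ a : L, (∀ x : L, ζ ⁅a, x⁆ = 0) → a = 0 := by
  have hdet : (LinearMap.toMatrix₂ b b (coadjointForm ζ)).det ≠ 0 := by
    rw [toMatrix₂_coadjointForm b c hxy hhx hhy hhz hxz hyz ζ hζ3 hζ]
    simp [Matrix.det_succ_row_zero, Fin.sum_univ_succ, Fin.succAbove]
  exact LinearMap.separatingLeft_of_det_ne_zero b hdet

/-- Let `𝔞` be the 4-dimensional Lie algebra with basis `{h, x, y, z}` (`= b 0, b 1, b 2, b 3`)
and nonzero brackets `[x,y] = z`, `[h,x] = c·x`, `[h,y] = (1−c)·y`, `[h,z] = z` over a field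
`k` of characteristic `0` with `c ∉ {0,1}`.  Let `ζ ∈ 𝔞*` be the element dual to `z`.  Then
the coadjoint stabilizer `𝔞^ζ = {a ∈ 𝔞 : ζ([a,b]) = 0 for all b ∈ 𝔞}` is zero. -/
theorem stmt7 {k L : Type*} [Field k] [CharZero k] [LieRing L] [LieAlgebra k L]
    (b : Module.Basis (Fin 4) k L) (c : k) (hc0 : c ≠ 0) (hc1 : c ≠ 1)
    (hxy : ⁅b 1, b 2⁆ = b 3)
    (hhx : ⁅b 0, b 1⁆ = c • b 1)
    (hhy : ⁅b 0, b 2⁆ = (1 - c) • b 2)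
    (hhz : ⁅b 0, b 3⁆ = b 3)
    (hxz : ⁅b 1, b 3⁆ = 0) (hyz : ⁅b 2, b 3⁆ = 0)
    (ζ : Module.Dual k L) (hζ3 : ζ (b 3) = 1) (hζ : ∀ i : Fin 4, i ≠ 3 → ζ (b i) = 0) :
    ∀ a : L, (∀ x : L, ζ ⁅a, x⁆ = 0) → a = 0 :=
  stmt7_general b c hxy hhx hhy hhz hxz hyz ζ hζ3 hζ
end

section
/- Let k be a field, A ⊆ R commutative k-algebras with R an integral domain and finitely generated as an algebra, and suppose there exists d ∈ A nonzero such that A[d⁻¹] = R[d⁻¹] inside Frac(R). If moreover R = A + dR and R is a finitely generated A-module, then A = R. -/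
/-!
By Nakayama's lemma applied to the finite `A`-module `R ⧸ A`, which equals `d • (R ⧸ A)`, some
`e = c d ∈ dA` acts as the identity on it, i.e. `(1 - c d) R ⊆ A`. Writing
`r = (1 - c d) r + c (d r)` shows that `d r ∈ A` forces `r ∈ A`. On the other hand
`R ⊆ A[d⁻¹]` says that every `r ∈ R` has some `dⁿ r ∈ A`, so `R = A`.
-/

namespace Subalgebra

variable {k R : Type*} [CommRing k] [CommRing R] [Algebra k R] (A : Subalgebra k R)

theorem mem_one_submodule_iff {r : R} : r ∈ (1 : Submodule A R) ↔ r ∈ A := by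
  simp [Submodule.mem_one]

theorem exists_sub_mul_mem_of_forall_mem_add_mul [Module.Finite A R] (d : A)
    (hsum : ∀ r : R, ∃ a ∈ A, ∃ r' : R, r = a + (d : R) * r') :
    ∃ c : A, ∀ r : R, r - c * d * r ∈ A := by
  set N : Submodule A R := 1
  have hQ : (⊤ : Submodule A (R ⧸ N)) ≤ Ideal.span {d} • ⊤ := by
    rintro q -
    obtain ⟨r, rfl⟩ := N.mkQ_surjective q
    obtain ⟨a, ha, r', rfl⟩ := hsum r
    have : N.mkQ (a + (d : R) * r') = d • N.mkQ r' := by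
      rw [← map_smul, Submodule.mkQ_apply, Submodule.mkQ_apply, Submodule.Quotient.eq,
        Algebra.smul_def, algebraMap_apply, add_sub_cancel_right, mem_one_submodule_iff]
      exact ha
    rw [this]
    exact Submodule.smul_mem_smul (Ideal.mem_span_singleton_self d) trivial
  obtain ⟨e, he, hQe⟩ := Submodule.exists_mem_and_smul_eq_self_of_fg_of_le_smul _ ⊤
    (Module.finite_def.mp inferInstance) hQ
  obtain ⟨c, rfl⟩ := Ideal.mem_span_singleton'.mp he
  refine ⟨c, fun r => ?_⟩
  have := hQe (N.mkQ r) trivial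
  rwa [← map_smul, Submodule.mkQ_apply, Submodule.mkQ_apply, Submodule.Quotient.eq,
    Algebra.smul_def, mem_one_submodule_iff, ← neg_mem_iff, neg_sub, map_mul, algebraMap_apply,
    algebraMap_apply] at this

theorem mem_of_mul_mem_of_sub_mul_mem {c d : A} (hc : ∀ r : R, r - c * d * r ∈ A) {r : R}
    (hdr : (d : R) * r ∈ A) : r ∈ A := by
  have : r = (r - c * d * r) + c * (d * r) := by ring
  rw [this]
  exact add_mem (hc r) (mul_mem c.2 hdr)

theorem mem_of_pow_mul_mem_of_sub_mul_mem {c d : A} (hc : ∀ r : R, r - c * d * r ∈ A) {r : R}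
    {n : ℕ} (hdr : (d : R) ^ n * r ∈ A) : r ∈ A := by
  induction n generalizing r with
  | zero => simpa using hdr
  | succ n ih =>
    refine A.mem_of_mul_mem_of_sub_mul_mem hc (ih ?_)
    rwa [← mul_assoc, ← pow_succ]

theorem exists_pow_mul_eq_of_mem_adjoin {K : Type*} [Field K] [Algebra R K] [Algebra k K]
    [IsScalarTower k R K] {d : R} (hd : d ∈ A) {y : K}
    (hy : y ∈ Algebra.adjoin k (algebraMap R K '' A ∪ {(algebraMap R K d)⁻¹})) :
    ∃ n : ℕ, ∃ a ∈ A, algebraMap R K d ^ n * y = algebraMap R K a := by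
  set f := algebraMap R K
  induction hy using Algebra.adjoin_induction with
  | mem y hy =>
    rcases hy with ⟨a, ha, rfl⟩ | rfl
    · exact ⟨0, a, ha, by simp⟩
    -- `n = 2`, since `d² · d⁻¹ = d` holds also at `d = 0`, where `d⁻¹ = 0`.
    · exact ⟨2, d, hd, by rw [sq, mul_self_mul_inv]⟩
  | algebraMap t =>
    exact ⟨0, algebraMap k R t, A.algebraMap_mem t,
      by simp [IsScalarTower.algebraMap_apply k R K, f]⟩
  | add y z _ _ hy hz =>
    obtain ⟨n, a, ha, hy⟩ := hy
    obtain ⟨m, b, hb, hz⟩ := hz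
    refine ⟨n + m, d ^ m * a + d ^ n * b,
      add_mem (mul_mem (pow_mem hd m) ha) (mul_mem (pow_mem hd n) hb), ?_⟩
    rw [map_add, map_mul, map_mul, map_pow, map_pow, ← hy, ← hz]
    ring
  | mul y z _ _ hy hz =>
    obtain ⟨n, a, ha, hy⟩ := hy
    obtain ⟨m, b, hb, hz⟩ := hz
    exact ⟨n + m, a * b, mul_mem ha hb, by rw [map_mul, ← hy, ← hz]; ring⟩

end Subalgebra

theorem stmt15_general {k R : Type*} [Field k] [CommRing R] [IsDomain R] [Algebra k R]
    (A : Subalgebra k R) [Module.Finite A R]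
    (d : A)
    (hloc : Algebra.adjoin k
        ((algebraMap R (FractionRing R) '' (A : Set R)) ∪
          {(algebraMap R (FractionRing R) (d : R))⁻¹})
      = Algebra.adjoin k
        (Set.range (algebraMap R (FractionRing R)) ∪
          {(algebraMap R (FractionRing R) (d : R))⁻¹}))
    (hsum : ∀ r : R, ∃ a ∈ A, ∃ r' : R, r = a + (d : R) * r') :
    A = ⊤ := by
  obtain ⟨c, hc⟩ := A.exists_sub_mul_mem_of_forall_mem_add_mul d hsum
  refine eq_top_iff.mpr fun r _ => ?_
  have hr : algebraMap R (FractionRing R) r ∈ Algebra.adjoin k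
      ((algebraMap R (FractionRing R) '' (A : Set R)) ∪
        {(algebraMap R (FractionRing R) (d : R))⁻¹}) :=
    hloc ▸ Algebra.subset_adjoin (Or.inl ⟨r, rfl⟩)
  obtain ⟨n, a, ha, hna⟩ := A.exists_pow_mul_eq_of_mem_adjoin d.2 hr
  rw [← map_pow, ← map_mul] at hna
  exact A.mem_of_pow_mul_mem_of_sub_mul_mem hc
    (IsFractionRing.injective R (FractionRing R) hna ▸ ha)

/-- Let `k` be a field, `A ⊆ R` commutative `k`-algebras with `R` an integral domain and
finitely generated as an algebra, and suppose there exists `d ∈ A` nonzero such that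
`A[d⁻¹] = R[d⁻¹]` inside `Frac(R)` (subalgebras of `Frac(R)` generated by `A`, resp. `R`,
together with `d⁻¹`).  If moreover `R = A + dR` and `R` is a finitely generated `A`-module,
then `A = R`. -/
theorem stmt15 {k R : Type*} [Field k] [CommRing R] [IsDomain R] [Algebra k R]
    [Algebra.FiniteType k R]
    (A : Subalgebra k R) [Module.Finite A R]
    (d : A) (hd : (d : R) ≠ 0)
    (hloc : Algebra.adjoin k
        ((algebraMap R (FractionRing R) '' (A : Set R)) ∪
          {(algebraMap R (FractionRing R) (d : R))⁻¹})
      = Algebra.adjoin k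
        (Set.range (algebraMap R (FractionRing R)) ∪
          {(algebraMap R (FractionRing R) (d : R))⁻¹}))
    (hsum : ∀ r : R, ∃ a ∈ A, ∃ r' : R, r = a + (d : R) * r') :
    A = ⊤ :=
  stmt15_general A d hloc hsum
end
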